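/- arXiv:2002.10726 — 7 statements merged into one kernel-verified Lean document; each statement's English description precedes it below -/
import Mathlib

section
/- For twice differentiable functions F, φ : ℝ^d → ℝ with φ convex, if σ·D_φ(x,y) ≤ D_F(x,y) ≤ L·D_φ(x,y) for all x, y, then σ∇²φ(x) ⪯ ∇²F(x) ⪯ L∇²φ(x) for all x. -/
/-!
Both inequalities have the form `a D_f ≤ b D_g`. With `G := b • ∇g - a • ∇f` this says that
`G y` is a subgradient of `b g - a f` at every `y`, so adding the inequalities at `(x, y)` and
`(y, x)` shows that `G` is monotone: `0 ≤ (G y - G x) (y - x)`. Along the ray `x + t v`, `t > 0`,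
this makes `y ↦ (G y - G x) v` minimal at `x`, and the first-order condition at this boundary
minimum is `0 ≤ DG(x) v v = b ∇²g(x)[v, v] - a ∇²f(x)[v, v]`.
-/

open Filter Set

variable {E : Type*} [NormedAddCommGroup E] [NormedSpace ℝ E]

theorem sub_apply_sub_nonneg_of_forall_add_apply_le {f : E → ℝ} {G : E → StrongDual ℝ E}
    (h : ∀ x y, f y + G y (x - y) ≤ f x) (x y : E) : 0 ≤ (G y - G x) (y - x) := by
  have hxy := h x y
  have hyx := h y x
  have : G y (x - y) = -G y (y - x) := by rw [← map_neg, neg_sub]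
  simp only [sub_apply]
  linarith

theorem HasFDerivAt.apply_self_nonneg_of_monotoneAt {G : E → StrongDual ℝ E}
    {G' : E →L[ℝ] StrongDual ℝ E} {x : E} (hG : HasFDerivAt G G' x)
    (hmono : ∀ y, 0 ≤ (G y - G x) (y - x)) (v : E) : 0 ≤ G' v v := by
  have hderiv : HasFDerivAt (fun y => (G y - G x) v) (G'.flip v) x := by
    simpa using (hG.sub_const (G x)).clm_apply (hasFDerivAt_const v x)
  have hray : ∀ t ∈ Ioi (0 : ℝ), 0 ≤ (G (x + t • v) - G x) v := by
    intro t (ht : 0 < t)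
    have := hmono (x + t • v)
    rw [add_sub_cancel_left, map_smul, smul_eq_mul] at this
    exact nonneg_of_mul_nonneg_right this ht
  have hmin : IsLocalMinOn (fun y => (G y - G x) v) {y | 0 ≤ (G y - G x) v} x :=
    eventually_of_mem self_mem_nhdsWithin fun y hy => by simpa using hy
  have hv : v ∈ posTangentConeAt {y | 0 ≤ (G y - G x) v} x :=
    mem_posTangentConeAt_of_frequently_mem
      (eventually_nhdsWithin_of_forall hray).frequently
  simpa using hmin.hasFDerivWithinAt_nonneg hderiv.hasFDerivWithinAt hv

theorem mul_fderiv_fderiv_le_of_mul_bregman_le {f g : E → ℝ} {a b : ℝ} {x : E}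
    (hf : DifferentiableAt ℝ (fderiv ℝ f) x) (hg : DifferentiableAt ℝ (fderiv ℝ g) x)
    (h : ∀ x y, a * (f x - f y - fderiv ℝ f y (x - y)) ≤ b * (g x - g y - fderiv ℝ g y (x - y)))
    (v : E) : a * fderiv ℝ (fderiv ℝ f) x v v ≤ b * fderiv ℝ (fderiv ℝ g) x v v := by
  have hsubgrad : ∀ x y, b * g y - a * f y + (b • fderiv ℝ g y - a • fderiv ℝ f y) (x - y)
      ≤ b * g x - a * f x := by
    intro x y
    have := h x y
    simp only [sub_apply, smul_apply, smul_eq_mul]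
    linarith
  have hG := (hg.hasFDerivAt.const_smul b).sub (hf.hasFDerivAt.const_smul a)
  have := hG.apply_self_nonneg_of_monotoneAt
    (sub_apply_sub_nonneg_of_forall_add_apply_le (f := fun z => b * g z - a * f z) hsubgrad x) v
  simp only [sub_apply, smul_apply, smul_eq_mul] at this
  linarith

theorem stmt1_general {d : ℕ} (φ F : EuclideanSpace ℝ (Fin d) → ℝ) (σ L : ℝ)
    (hφ : ContDiff ℝ 2 φ) (hF : ContDiff ℝ 2 F)
    (hdiv : ∀ x y,
      σ * (φ x - φ y - fderiv ℝ φ y (x - y)) ≤ F x - F y - fderiv ℝ F y (x - y) ∧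
      F x - F y - fderiv ℝ F y (x - y) ≤ L * (φ x - φ y - fderiv ℝ φ y (x - y))) :
    ∀ x v,
      σ * fderiv ℝ (fun y => fderiv ℝ φ y) x v v ≤ fderiv ℝ (fun y => fderiv ℝ F y) x v v ∧
      fderiv ℝ (fun y => fderiv ℝ F y) x v v ≤ L * fderiv ℝ (fun y => fderiv ℝ φ y) x v v := by
  intro x v
  have hφ' : DifferentiableAt ℝ (fderiv ℝ φ) x :=
    (hφ.fderiv_right le_rfl).differentiable one_ne_zero x
  have hF' : DifferentiableAt ℝ (fderiv ℝ F) x :=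
    (hF.fderiv_right le_rfl).differentiable one_ne_zero x
  constructor
  · simpa using mul_fderiv_fderiv_le_of_mul_bregman_le (b := 1) hφ' hF'
      (fun x y => by simpa using (hdiv x y).1) v
  · simpa using mul_fderiv_fderiv_le_of_mul_bregman_le (a := 1) hF' hφ'
      (fun x y => by simpa using (hdiv x y).2) v

/-- If `σ D_φ(x,y) ≤ D_F(x,y) ≤ L D_φ(x,y)` for all `x, y`, then
`σ ∇²φ(x) ⪯ ∇²F(x) ⪯ L ∇²φ(x)` for all `x` (as quadratic forms). -/
theorem stmt1 {d : ℕ} (φ F : EuclideanSpace ℝ (Fin d) → ℝ) (σ L : ℝ)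
    (hσ : 0 ≤ σ) (hL : 0 ≤ L)
    (hφ : ContDiff ℝ 2 φ) (hF : ContDiff ℝ 2 F)
    (hconv : ConvexOn ℝ Set.univ φ)
    (hdiv : ∀ x y,
      σ * (φ x - φ y - fderiv ℝ φ y (x - y)) ≤ F x - F y - fderiv ℝ F y (x - y) ∧
      F x - F y - fderiv ℝ F y (x - y) ≤ L * (φ x - φ y - fderiv ℝ φ y (x - y))) :
    ∀ x v,
      σ * fderiv ℝ (fun y => fderiv ℝ φ y) x v v ≤ fderiv ℝ (fun y => fderiv ℝ F y) x v v ∧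
      fderiv ℝ (fun y => fderiv ℝ F y) x v v ≤ L * fderiv ℝ (fun y => fderiv ℝ φ y) x v v :=
  stmt1_general φ F σ L hφ hF hdiv
end

section
/- Let F, f : ℝ^d → ℝ be twice differentiable with ∇²F(x) ⪰ σ_F I for all x, let μ > 0 satisfy ‖∇²f(x) − ∇²F(x)‖_op ≤ μ for all x, and define φ(x) = f(x) + (μ/2)‖x‖². Then (σ_F/(σ_F + 2μ))·∇²φ(x) ⪯ ∇²F(x) ⪯ ∇²φ(x) for all x. -/
/-!
The Hessian of `φ` is `∇²f + μ I`, and `‖∇²f − ∇²F‖ ≤ μ` places it between `∇²F` and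
`∇²F + 2μ I`. Strong convexity `σ_F I ⪯ ∇²F` absorbs the extra `2μ I` into a multiple of `∇²F`:
`∇²F + 2μ I ⪯ (1 + 2μ/σ_F) ∇²F`.
-/

section NormSqPerturbation

variable {E : Type*} [NormedAddCommGroup E] [InnerProductSpace ℝ E] {f : E → ℝ}

theorem fderiv_add_mul_norm_sq (hf : Differentiable ℝ f) (c : ℝ) (x : E) :
    fderiv ℝ (fun y => f y + c * ‖y‖ ^ 2) x = fderiv ℝ f x + (2 * c) • innerSL ℝ x := by
  have h : HasFDerivAt (fun y => f y + c * ‖y‖ ^ 2) _ x :=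
    (hf x).hasFDerivAt.add ((hasStrictFDerivAt_norm_sq x).hasFDerivAt.const_mul c)
  rw [h.fderiv, ← Nat.cast_smul_eq_nsmul ℝ, smul_smul]
  norm_num [mul_comm]

theorem fderiv_fderiv_add_mul_norm_sq_apply (hf : Differentiable ℝ f) {x : E}
    (hf' : DifferentiableAt ℝ (fderiv ℝ f) x) (c : ℝ) (v w : E) :
    fderiv ℝ (fderiv ℝ fun y => f y + c * ‖y‖ ^ 2) x v w =
      fderiv ℝ (fderiv ℝ f) x v w + 2 * c * inner ℝ v w := by
  have hinner : HasFDerivAt (fun y => (2 * c) • innerSL ℝ y) ((2 * c) • innerSL ℝ) x :=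
    ((innerSL ℝ).hasFDerivAt (x := x)).const_smul (2 * c)
  have hD : HasFDerivAt (fun y => fderiv ℝ f y + (2 * c) • innerSL ℝ y) _ x :=
    hf'.hasFDerivAt.add hinner
  rw [funext (fderiv_add_mul_norm_sq hf c), hD.fderiv]
  rfl

end NormSqPerturbation

theorem abs_apply_self_le_opNorm_mul_sq {E : Type*} [SeminormedAddCommGroup E] [NormedSpace ℝ E]
    (T : E →L[ℝ] E →L[ℝ] ℝ) (v : E) : |T v v| ≤ ‖T‖ * ‖v‖ ^ 2 := by
  simpa [sq, mul_assoc] using T.le_opNorm₂ v v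

theorem div_add_mul_mul_le_of_abs_sub_le {σ μ s a b : ℝ} (hσ : 0 < σ) (hμ : 0 ≤ μ)
    (ha : σ * s ≤ a) (hab : |b - a| ≤ μ * s) : σ / (σ + 2 * μ) * (b + μ * s) ≤ a := by
  have hb : b + μ * s ≤ a + 2 * μ * s := by linarith [(abs_le.mp hab).2]
  rw [div_mul_eq_mul_div, div_le_iff₀ (by positivity)]
  nlinarith [mul_le_mul_of_nonneg_left hb hσ.le, mul_le_mul_of_nonneg_left ha hμ]

theorem stmt2_general {d : ℕ} (F f : EuclideanSpace ℝ (Fin d) → ℝ) (σF μ : ℝ)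
    (hσF : 0 < σF)
    (hfsm : ContDiff ℝ 2 f)
    (hlower : ∀ x v, σF * ‖v‖ ^ 2 ≤ fderiv ℝ (fun y => fderiv ℝ F y) x v v)
    (hclose : ∀ x,
      ‖fderiv ℝ (fun y => fderiv ℝ f y) x - fderiv ℝ (fun y => fderiv ℝ F y) x‖ ≤ μ)
    (φ : EuclideanSpace ℝ (Fin d) → ℝ)
    (hφ : φ = fun x => f x + (μ / 2) * ‖x‖ ^ 2) :
    ∀ x v,
      (σF / (σF + 2 * μ)) * fderiv ℝ (fun y => fderiv ℝ φ y) x v v ≤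
        fderiv ℝ (fun y => fderiv ℝ F y) x v v ∧
      fderiv ℝ (fun y => fderiv ℝ F y) x v v ≤ fderiv ℝ (fun y => fderiv ℝ φ y) x v v := by
  intro x v
  have hf : Differentiable ℝ f := hfsm.differentiable (by norm_num)
  have hf' : Differentiable ℝ (fderiv ℝ f) :=
    (hfsm.fderiv_right (m := 1) (by norm_num)).differentiable (by norm_num)
  have hφ'' : fderiv ℝ (fderiv ℝ φ) x v v = fderiv ℝ (fderiv ℝ f) x v v + μ * ‖v‖ ^ 2 := by
    rw [hφ, fderiv_fderiv_add_mul_norm_sq_apply hf (hf' x), real_inner_self_eq_norm_sq]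
    ring
  have hgap : |fderiv ℝ (fderiv ℝ f) x v v - fderiv ℝ (fderiv ℝ F) x v v| ≤ μ * ‖v‖ ^ 2 :=
    (abs_apply_self_le_opNorm_mul_sq (fderiv ℝ (fderiv ℝ f) x - fderiv ℝ (fderiv ℝ F) x) v).trans
      (by gcongr; exact hclose x)
  have hμ : 0 ≤ μ := le_trans (by positivity) (hclose x)
  rw [hφ'']
  exact ⟨div_add_mul_mul_le_of_abs_sub_le hσF hμ (hlower x v) hgap,
    by linarith [(abs_le.mp hgap).1]⟩

/-- If `∇²F(x) ⪰ σ_F I`, `‖∇²f(x) − ∇²F(x)‖_op ≤ μ` for all `x`, and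
`φ(x) = f(x) + (μ/2)‖x‖²`, then `(σ_F/(σ_F+2μ)) ∇²φ(x) ⪯ ∇²F(x) ⪯ ∇²φ(x)` for all `x`. -/
theorem stmt2 {d : ℕ} (F f : EuclideanSpace ℝ (Fin d) → ℝ) (σF μ : ℝ)
    (hσF : 0 < σF) (hμ : 0 < μ)
    (hFsm : ContDiff ℝ 2 F) (hfsm : ContDiff ℝ 2 f)
    (hlower : ∀ x v, σF * ‖v‖ ^ 2 ≤ fderiv ℝ (fun y => fderiv ℝ F y) x v v)
    (hclose : ∀ x,
      ‖fderiv ℝ (fun y => fderiv ℝ f y) x - fderiv ℝ (fun y => fderiv ℝ F y) x‖ ≤ μ)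
    (φ : EuclideanSpace ℝ (Fin d) → ℝ)
    (hφ : φ = fun x => f x + (μ / 2) * ‖x‖ ^ 2) :
    ∀ x v,
      (σF / (σF + 2 * μ)) * fderiv ℝ (fun y => fderiv ℝ φ y) x v v ≤
        fderiv ℝ (fun y => fderiv ℝ F y) x v v ∧
      fderiv ℝ (fun y => fderiv ℝ F y) x v v ≤ fderiv ℝ (fun y => fderiv ℝ φ y) x v v :=
  stmt2_general F f σF μ hσF hfsm hlower hclose φ hφ
end

section
/- Suppose φ : ℝ^d → ℝ is twice continuously differentiable with σ I ⪯ ∇²φ(x) ⪯ L I for all x, with 0 < σ ≤ L. Let x_{t+1} − y_t = α(v_{t+1} − w_t) where w_t = (1−β)v_t + β y_t with β ∈ [0,1] and α ∈ ℝ. Then D_φ(x_{t+1}, y_t) ≤ α²·(L/σ)·((1−β)·D_φ(v_{t+1}, v_t) + β·D_φ(v_{t+1}, y_t)). -/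
/-!
The two-sided Hessian bound gives, by second-order Taylor expansion along the segment from `y`
to `x`, the sandwich `σ/2 ‖x - y‖² ≤ D_φ(x, y) ≤ L/2 ‖x - y‖²`. Hence
`D_φ(x₊, y) ≤ L/2 α² ‖(1-β)(v₊ - v) + β(v₊ - y)‖²`; convexity of `‖·‖²` splits the norm into
`(1-β)‖v₊ - v‖² + β‖v₊ - y‖²`, and the lower bound turns each square back into `2/σ` times
the corresponding divergence.
-/

open scoped RealInnerProductSpace

/-- Bregman divergence `D_φ(x,y) = φ(x) − φ(y) − ⟨∇φ(y), x−y⟩`. -/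
noncomputable def bregman {d : ℕ} (φ : EuclideanSpace ℝ (Fin d) → ℝ)
    (x y : EuclideanSpace ℝ (Fin d)) : ℝ :=
  φ x - φ y - ⟪gradient φ y, x - y⟫

section OneDim

variable {g g' g'' : ℝ → ℝ} {C : ℝ}

theorem sub_sub_deriv_le_of_deriv2_le (hg : ∀ t, HasDerivAt g (g' t) t)
    (hg' : ∀ t, HasDerivAt g' (g'' t) t) (hC : ∀ t, g'' t ≤ C) :
    g 1 - g 0 - g' 0 ≤ C / 2 := by
  have slope_le : ∀ t, 0 ≤ t → g' t ≤ g' 0 + C * t := fun t ht => by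
    have := image_sub_le_mul_sub_of_deriv_le (fun s => (hg' s).differentiableAt)
      (fun s => (hg' s).deriv ▸ hC s) ht
    linarith
  have hB : ∀ t, HasDerivAt (fun s => g 0 + g' 0 * s + C / 2 * s ^ 2) (g' 0 + C * t) t :=
    fun t => (((hasDerivAt_id' t).const_mul (g' 0)).const_add (g 0) |>.add
      ((hasDerivAt_pow 2 t).const_mul (C / 2))).congr_deriv (by ring)
  have := image_le_of_deriv_right_le_deriv_boundary
    (fun t _ => (hg t).continuousAt.continuousWithinAt) (fun t _ => (hg t).hasDerivWithinAt)
    (by simp) (fun t _ => (hB t).continuousAt.continuousWithinAt)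
    (fun t _ => (hB t).hasDerivWithinAt) (fun t ht => slope_le t ht.1)
    (Set.right_mem_Icc.2 zero_le_one)
  simp only [mul_one, one_pow] at this
  linarith

theorem le_sub_sub_deriv_of_le_deriv2 (hg : ∀ t, HasDerivAt g (g' t) t)
    (hg' : ∀ t, HasDerivAt g' (g'' t) t) (hC : ∀ t, C ≤ g'' t) :
    C / 2 ≤ g 1 - g 0 - g' 0 := by
  have := sub_sub_deriv_le_of_deriv2_le (g := fun t => -g t) (g'' := fun t => -g'' t)
    (fun t => (hg t).neg) (fun t => (hg' t).neg) (fun t => neg_le_neg (hC t))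
  linarith

end OneDim

section Taylor

variable {E : Type*} [NormedAddCommGroup E] [NormedSpace ℝ E] {f : E → ℝ} {C : ℝ}

theorem ContDiff.hasDerivAt_comp_lineMap (hf : ContDiff ℝ 2 f) (x y : E) (t : ℝ) :
    HasDerivAt (fun s => f (AffineMap.lineMap y x s))
      (fderiv ℝ f (AffineMap.lineMap y x t) (x - y)) t :=
  ((hf.differentiable (by norm_num)) _).hasFDerivAt.comp_hasDerivAt t AffineMap.hasDerivAt_lineMap

theorem ContDiff.hasDerivAt_fderiv_comp_lineMap (hf : ContDiff ℝ 2 f) (x y : E) (t : ℝ) :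
    HasDerivAt (fun s => fderiv ℝ f (AffineMap.lineMap y x s) (x - y))
      (fderiv ℝ (fderiv ℝ f) (AffineMap.lineMap y x t) (x - y) (x - y)) t := by
  have hf' : ContDiff ℝ 1 (fderiv ℝ f) := hf.fderiv_right (by norm_num)
  have hDf : HasDerivAt (fun s => fderiv ℝ f (AffineMap.lineMap y x s))
      (fderiv ℝ (fderiv ℝ f) (AffineMap.lineMap y x t) (x - y)) t :=
    (hf'.differentiable one_ne_zero _).hasFDerivAt.comp_hasDerivAt t AffineMap.hasDerivAt_lineMap
  simpa using hDf.clm_apply (hasDerivAt_const t (x - y))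

theorem sub_sub_fderiv_le_of_fderiv2_le (hf : ContDiff ℝ 2 f)
    (hC : ∀ z u, fderiv ℝ (fderiv ℝ f) z u u ≤ C * ‖u‖ ^ 2) (x y : E) :
    f x - f y - fderiv ℝ f y (x - y) ≤ C / 2 * ‖x - y‖ ^ 2 := by
  have := sub_sub_deriv_le_of_deriv2_le (hf.hasDerivAt_comp_lineMap x y)
    (hf.hasDerivAt_fderiv_comp_lineMap x y) (fun _ => hC _ (x - y))
  simpa [mul_div_right_comm] using this

theorem le_sub_sub_fderiv_of_le_fderiv2 (hf : ContDiff ℝ 2 f)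
    (hC : ∀ z u, C * ‖u‖ ^ 2 ≤ fderiv ℝ (fderiv ℝ f) z u u) (x y : E) :
    C / 2 * ‖x - y‖ ^ 2 ≤ f x - f y - fderiv ℝ f y (x - y) := by
  have := le_sub_sub_deriv_of_le_deriv2 (hf.hasDerivAt_comp_lineMap x y)
    (hf.hasDerivAt_fderiv_comp_lineMap x y) (fun _ => hC _ (x - y))
  simpa [mul_div_right_comm] using this

end Taylor

theorem norm_convexComb_sq_le {E : Type*} [SeminormedAddCommGroup E] [NormedSpace ℝ E]
    {β : ℝ} (hβ₀ : 0 ≤ β) (hβ₁ : β ≤ 1) (p q : E) :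
    ‖(1 - β) • p + β • q‖ ^ 2 ≤ (1 - β) * ‖p‖ ^ 2 + β * ‖q‖ ^ 2 :=
  (convexOn_univ_norm.pow (fun _ _ => norm_nonneg _) 2).2 trivial trivial
    (sub_nonneg.2 hβ₁) hβ₀ (sub_add_cancel 1 β)

theorem bregman_eq_sub_sub_fderiv {d : ℕ} (φ : EuclideanSpace ℝ (Fin d) → ℝ)
    (x y : EuclideanSpace ℝ (Fin d)) :
    bregman φ x y = φ x - φ y - fderiv ℝ φ y (x - y) := by
  rw [bregman, gradient, InnerProductSpace.toDual_symm_apply]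

/-- if `σ I ⪯ ∇²φ ⪯ L I` with `0 < σ ≤ L`, and
`x₊ − y = α (v₊ − w)` with `w = (1−β) v + β y`, `β ∈ [0,1]`, then
`D_φ(x₊, y) ≤ α² (L/σ) ((1−β) D_φ(v₊, v) + β D_φ(v₊, y))`. -/
theorem stmt3 {d : ℕ} (φ : EuclideanSpace ℝ (Fin d) → ℝ) (σ L : ℝ)
    (hσ : 0 < σ) (hσL : σ ≤ L)
    (hφ : ContDiff ℝ 2 φ)
    (hess : ∀ x v, σ * ‖v‖ ^ 2 ≤ fderiv ℝ (fun y => fderiv ℝ φ y) x v v ∧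
      fderiv ℝ (fun y => fderiv ℝ φ y) x v v ≤ L * ‖v‖ ^ 2)
    (α β : ℝ) (hβ : β ∈ Set.Icc (0 : ℝ) 1)
    (xnext y v vnext w : EuclideanSpace ℝ (Fin d))
    (hw : w = (1 - β) • v + β • y)
    (hx : xnext - y = α • (vnext - w)) :
    bregman φ xnext y ≤
      α ^ 2 * (L / σ) * ((1 - β) * bregman φ vnext v + β * bregman φ vnext y) := by
  have upper := (bregman_eq_sub_sub_fderiv φ xnext y).trans_le
    (sub_sub_fderiv_le_of_fderiv2_le hφ (fun z u => (hess z u).2) xnext y)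
  have lower := fun x y =>
    (le_sub_sub_fderiv_of_le_fderiv2 hφ (fun z u => (hess z u).1) x y).trans_eq
      (bregman_eq_sub_sub_fderiv φ x y).symm
  have hsplit : xnext - y = α • ((1 - β) • (vnext - v) + β • (vnext - y)) := by
    rw [hx, hw]; module
  have hL : 0 ≤ L := hσ.le.trans hσL
  obtain ⟨hβ₀, hβ₁⟩ := hβ
  calc bregman φ xnext y
      ≤ L / 2 * α ^ 2 * ‖(1 - β) • (vnext - v) + β • (vnext - y)‖ ^ 2 := by
        rw [hsplit, norm_smul, mul_pow, Real.norm_eq_abs, sq_abs, ← mul_assoc] at upper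
        exact upper
    _ ≤ L / 2 * α ^ 2 * ((1 - β) * ‖vnext - v‖ ^ 2 + β * ‖vnext - y‖ ^ 2) := by
        gcongr; exact norm_convexComb_sq_le hβ₀ hβ₁ _ _
    _ = α ^ 2 * (L / σ) *
          ((1 - β) * (σ / 2 * ‖vnext - v‖ ^ 2) + β * (σ / 2 * ‖vnext - y‖ ^ 2)) := by
        field_simp
    _ ≤ α ^ 2 * (L / σ) * ((1 - β) * bregman φ vnext v + β * bregman φ vnext y) := by
        have : 0 ≤ 1 - β := sub_nonneg.2 hβ₁
        gcongr
        exacts [lower vnext v, lower vnext y]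
end

section
/- Let g : ℝ^d → ℝ ∪ {+∞} be a proper convex function, φ twice differentiable and strictly convex, β ∈ [0,1], and let v₊ = argmin_x { g(x) + (1−β)D_φ(x, v) + β D_φ(x, y) }. Then for every x in the domain of g: g(v₊) + (1−β)D_φ(v₊, v) + β D_φ(v₊, y) ≤ g(x) + (1−β)D_φ(x, v) + β D_φ(x, y) − D_φ(x, v₊). -/
open scoped RealInnerProductSpace

theorem ConvexOn.sub_le_of_isMinOn_add {E : Type*} [NormedAddCommGroup E] [NormedSpace ℝ E]
    {s : Set E} {g f : E → ℝ} {f' : E →L[ℝ] ℝ} {p x : E} (hg : ConvexOn ℝ s g)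
    (hf : HasFDerivAt f f' p) (hmin : IsMinOn (g + f) s p) (hp : p ∈ s) (hx : x ∈ s) :
    g p - g x ≤ f' (x - p) := by
  set ψ : ℝ → ℝ := fun t => f (p + t • (x - p)) + t * (g x - g p)
  have hψ : HasDerivAt ψ (f' (x - p) + (g x - g p)) 0 := by
    have hline : HasDerivAt (fun t : ℝ => p + t • (x - p)) (x - p) 0 := by
      simpa using ((hasDerivAt_id (0 : ℝ)).smul_const (x - p)).const_add p
    have hf0 : HasFDerivAt f f' (p + (0 : ℝ) • (x - p)) := by simpa using hf
    exact (hf0.comp_hasDerivAt 0 hline).add (hasDerivAt_mul_const (g x - g p))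
  have hψmin : IsMinOn ψ (Set.Icc 0 1) 0 := by
    intro t ⟨ht0, ht1⟩
    have hseg : p + t • (x - p) = (1 - t) • p + t • x := by module
    have hconv := hg.2 hp hx (sub_nonneg.2 ht1) ht0 (by ring)
    have hmin_t : (g + f) p ≤ (g + f) (p + t • (x - p)) :=
      hmin (hseg ▸ hg.1 hp hx (sub_nonneg.2 ht1) ht0 (by ring))
    simp only [Pi.add_apply, smul_eq_mul, ← hseg] at hconv hmin_t
    simp only [Set.mem_ofPred_eq, ψ, zero_smul, add_zero, zero_mul]
    linarith
  have hcone : (1 : ℝ) ∈ posTangentConeAt (Set.Icc 0 1) 0 :=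
    mem_posTangentConeAt_of_segment_subset (by simp [segment_eq_Icc])
  have := hψmin.localize.hasFDerivWithinAt_nonneg hψ.hasFDerivAt.hasFDerivWithinAt hcone
  simp only [ContinuousLinearMap.toSpanSingleton_apply, one_smul] at this
  linarith

section Bregman

variable {d : ℕ} (φ : EuclideanSpace ℝ (Fin d) → ℝ)

theorem bregman_sub_bregman_sub_bregman (x y z : EuclideanSpace ℝ (Fin d)) :
    bregman φ x y - bregman φ z y - bregman φ x z = ⟪gradient φ z - gradient φ y, x - z⟫ := by
  have hsplit : x - y = (x - z) + (z - y) := by abel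
  simp only [bregman, hsplit, inner_add_right, inner_sub_left]
  ring

theorem hasFDerivAt_bregman_left {x : EuclideanSpace ℝ (Fin d)} (hφ : DifferentiableAt ℝ φ x)
    (y : EuclideanSpace ℝ (Fin d)) :
    HasFDerivAt (fun z => bregman φ z y) (innerSL ℝ (gradient φ x - gradient φ y)) x := by
  have hlin : HasFDerivAt (fun z => ⟪gradient φ y, z - y⟫) (innerSL ℝ (gradient φ y)) x :=
    (innerSL ℝ (gradient φ y)).hasFDerivAt.comp x ((hasFDerivAt_id x).sub_const y)
  refine ((hφ.hasFDerivAt.sub_const (φ y)).sub hlin).congr_fderiv ?_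
  ext w
  simp [inner_gradient_left]

end Bregman

theorem stmt5_general {d : ℕ} (g : EuclideanSpace ℝ (Fin d) → ℝ)
    (s : Set (EuclideanSpace ℝ (Fin d)))
    (hg : ConvexOn ℝ s g)
    (φ : EuclideanSpace ℝ (Fin d) → ℝ)
    (hφ : ContDiff ℝ 2 φ)
    (β : ℝ)
    (v y vplus : EuclideanSpace ℝ (Fin d)) (hvplus : vplus ∈ s)
    (hmin : ∀ x ∈ s,
      g vplus + (1 - β) * bregman φ vplus v + β * bregman φ vplus y ≤
        g x + (1 - β) * bregman φ x v + β * bregman φ x y) :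
    ∀ x ∈ s,
      g vplus + (1 - β) * bregman φ vplus v + β * bregman φ vplus y ≤
        g x + (1 - β) * bregman φ x v + β * bregman φ x y - bregman φ x vplus := by
  intro x hx
  have hφ' : DifferentiableAt ℝ φ vplus := (hφ.differentiable two_ne_zero) vplus
  have hf := ((hasFDerivAt_bregman_left φ hφ' v).const_mul (1 - β)).add
    ((hasFDerivAt_bregman_left φ hφ' y).const_mul β)
  have hopt := hg.sub_le_of_isMinOn_add hf
    (fun z hz => by simpa only [Set.mem_ofPred_eq, Pi.add_apply, add_assoc] using hmin z hz)
    hvplus hx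
  simp only [add_apply, smul_apply, innerSL_apply_apply, smul_eq_mul] at hopt
  rw [← bregman_sub_bregman_sub_bregman, ← bregman_sub_bregman_sub_bregman] at hopt
  linarith

/-- three-point descent property of Bregman proximal points:
if `v₊` minimizes `g(x) + (1−β) D_φ(x,v) + β D_φ(x,y)` over the domain `s` of the
proper convex function `g`, then for every `x ∈ s`,
`g(v₊) + (1−β) D_φ(v₊,v) + β D_φ(v₊,y) ≤ g(x) + (1−β) D_φ(x,v) + β D_φ(x,y) − D_φ(x,v₊)`. -/
theorem stmt5 {d : ℕ} (g : EuclideanSpace ℝ (Fin d) → ℝ)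
    (s : Set (EuclideanSpace ℝ (Fin d))) (hs : s.Nonempty)
    (hg : ConvexOn ℝ s g)
    (φ : EuclideanSpace ℝ (Fin d) → ℝ)
    (hφ : ContDiff ℝ 2 φ) (hφstrict : StrictConvexOn ℝ Set.univ φ)
    (β : ℝ) (hβ : β ∈ Set.Icc (0 : ℝ) 1)
    (v y vplus : EuclideanSpace ℝ (Fin d)) (hvplus : vplus ∈ s)
    (hmin : ∀ x ∈ s,
      g vplus + (1 - β) * bregman φ vplus v + β * bregman φ vplus y ≤
        g x + (1 - β) * bregman φ x v + β * bregman φ x y) :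
    ∀ x ∈ s,
      g vplus + (1 - β) * bregman φ vplus v + β * bregman φ vplus y ≤
        g x + (1 - β) * bregman φ x v + β * bregman φ x y - bregman φ x vplus :=
  stmt5_general g s hg φ hφ β v y vplus hvplus hmin
end

section
/- Suppose F is L-smooth relative to φ, i.e., F(x) ≤ F(y) + ⟨∇F(y), x−y⟩ + L·D_φ(x,y) for all x,y, and σ-strongly convex relative to φ, i.e., F(x) ≥ F(y) + ⟨∇F(y), x−y⟩ + σ·D_φ(x,y). If x_* minimizes F + ψ for convex ψ, and x_{t+1} = argmin_x {⟨∇F(x_t), x⟩ + ψ(x) + L·D_φ(x, x_t)}, then F(x_{t+1}) + ψ(x_{t+1}) − F(x_*) − ψ(x_*) ≤ (1 − σ/L)^{t+1} · L · D_φ(x_*, x_0) after iterating from x_0, provided D_φ satisfies the three-point identity and all argmins exist. -/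
/-!
Optimality of the proximal step `x⁺` gives, through the three-point identity of the Bregman
divergence, `⟨∇F(x), x⁺⟩ + ψ(x⁺) + L·D(x⁺, x) + L·D(u, x⁺) ≤ ⟨∇F(x), u⟩ + ψ(u) + L·D(u, x)`
for every `u`. Bounding the left side with relative smoothness and the right side with relative
strong convexity at `u = x_*` yields the Lyapunov inequality
`(F + ψ)(x⁺) − (F + ψ)(x_*) + L·D(x_*, x⁺) ≤ (1 − σ/L)·L·D(x_*, x)`.
Both terms on the left are nonnegative, so `L·D(x_*, x_t)` contracts geometrically, and the gap
with it.
-/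

open scoped RealInnerProductSpace

open Set

theorem ConvexOn.sub_inner_le_of_isMinOn_add {E : Type*} [NormedAddCommGroup E]
    [InnerProductSpace ℝ E] [CompleteSpace E] {ψ g : E → ℝ} {g' p : E}
    (hψ : ConvexOn ℝ univ ψ) (hg : HasGradientAt g g' p) (hmin : IsMinOn (ψ + g) univ p)
    (u : E) : ψ p - ⟪g', u - p⟫ ≤ ψ u := by
  -- `g` along the segment from `p` to `u`, plus the chord of `ψ`, is still minimal at `p`.
  let k : ℝ → ℝ := fun t ↦ g (p + t • (u - p)) + (ψ p + t * (ψ u - ψ p))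
  have hk : HasDerivAt k (⟪g', u - p⟫ + (ψ u - ψ p)) 0 := by
    have hline : HasDerivAt (fun t : ℝ ↦ p + t • (u - p)) (u - p) 0 := by
      simpa using ((hasDerivAt_id (0 : ℝ)).smul_const (u - p)).const_add p
    have hg0 : HasFDerivAt g (InnerProductSpace.toDual ℝ E g') (p + (0 : ℝ) • (u - p)) := by
      simpa using hg.hasFDerivAt
    exact (hg0.comp_hasDerivAt 0 hline).add
      (((hasDerivAt_id (0 : ℝ)).mul_const (ψ u - ψ p)).const_add (ψ p) |>.congr_deriv (by simp))
  have hkmin : IsMinOn k (Icc 0 1) 0 := by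
    intro t ⟨ht0, ht1⟩
    have hchord : ψ (p + t • (u - p)) ≤ ψ p + t * (ψ u - ψ p) :=
      calc ψ (p + t • (u - p)) = ψ ((1 - t) • p + t • u) := by congr 1; module
        _ ≤ (1 - t) • ψ p + t • ψ u :=
          hψ.2 (mem_univ p) (mem_univ u) (sub_nonneg.2 ht1) ht0 (sub_add_cancel 1 t)
        _ = ψ p + t * (ψ u - ψ p) := by simp only [smul_eq_mul]; ring
    have hle : ψ p + g p ≤ ψ (p + t • (u - p)) + g (p + t • (u - p)) :=
      isMinOn_univ_iff.1 hmin _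
    show g (p + (0 : ℝ) • (u - p)) + (ψ p + 0 * (ψ u - ψ p)) ≤ k t
    simp only [zero_smul, add_zero, zero_mul, k]
    linarith
  have hderiv : 0 ≤ ⟪g', u - p⟫ + (ψ u - ψ p) := by
    simpa using hkmin.localize.hasFDerivWithinAt_nonneg hk.hasFDerivAt.hasFDerivWithinAt
      (y := 1) (mem_posTangentConeAt_of_segment_subset (by simp [segment_eq_Icc]))
  linarith

theorem le_pow_mul_of_add_le_mul {e b : ℕ → ℝ} {q : ℝ} (hq : 0 ≤ q) (he : ∀ t, 0 ≤ e (t + 1))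
    (hb : ∀ t, 0 ≤ b t) (h : ∀ t, e (t + 1) + b (t + 1) ≤ q * b t) (t : ℕ) :
    e (t + 1) ≤ q ^ (t + 1) * b 0 := by
  have hgeom : b t ≤ q ^ t * b 0 := le_geom hq t fun k _ ↦ by linarith [h k, he k]
  calc e (t + 1) ≤ q * b t := by linarith [h t, hb (t + 1)]
    _ ≤ q * (q ^ t * b 0) := by gcongr
    _ = q ^ (t + 1) * b 0 := by ring

section Bregman

variable {d : ℕ} {φ : EuclideanSpace ℝ (Fin d) → ℝ}

theorem bregman_nonneg (hφ : ConvexOn ℝ univ φ) {y : EuclideanSpace ℝ (Fin d)}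
    (hφy : DifferentiableAt ℝ φ y) (x : EuclideanSpace ℝ (Fin d)) : 0 ≤ bregman φ x y := by
  -- `y` minimizes `φ + (-φ) = 0`.
  have hmin : IsMinOn (φ + -φ) univ y := isMinOn_univ_iff.2 fun z ↦ by simp
  have hneg : HasGradientAt (-φ) (-gradient φ y) y := by
    rw [hasGradientAt_iff_hasFDerivAt, map_neg]
    exact hφy.hasGradientAt.hasFDerivAt.neg
  have := hφ.sub_inner_le_of_isMinOn_add hneg hmin x
  rw [inner_neg_left] at this
  rw [bregman]
  linarith

theorem bregman_three_point (φ : EuclideanSpace ℝ (Fin d) → ℝ)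
    (u p a : EuclideanSpace ℝ (Fin d)) :
    bregman φ u a = bregman φ p a + bregman φ u p + ⟪gradient φ p - gradient φ a, u - p⟫ := by
  simp only [bregman, inner_sub_left, inner_sub_right]
  ring

theorem hasGradientAt_bregman_left {p : EuclideanSpace ℝ (Fin d)} (hφ : DifferentiableAt ℝ φ p)
    (a : EuclideanSpace ℝ (Fin d)) :
    HasGradientAt (fun x ↦ bregman φ x a) (gradient φ p - gradient φ a) p := by
  have hlin : HasFDerivAt (fun x ↦ ⟪gradient φ a, x - a⟫)
      (InnerProductSpace.toDual ℝ _ (gradient φ a)) p := by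
    simpa only [InnerProductSpace.toDual_apply_apply, ← inner_sub_right] using
      ((InnerProductSpace.toDual ℝ _ (gradient φ a)).hasFDerivAt (x := p)).sub_const
        ⟪gradient φ a, a⟫
  rw [hasGradientAt_iff_hasFDerivAt, map_sub]
  exact (hφ.hasGradientAt.hasFDerivAt.sub_const (φ a)).sub hlin

theorem bregman_proximal_three_point {ψ : EuclideanSpace ℝ (Fin d) → ℝ} {L : ℝ}
    {c a p : EuclideanSpace ℝ (Fin d)} (hψ : ConvexOn ℝ univ ψ) (hφ : DifferentiableAt ℝ φ p)
    (hmin : IsMinOn (fun x ↦ ⟪c, x⟫ + ψ x + L * bregman φ x a) univ p)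
    (u : EuclideanSpace ℝ (Fin d)) :
    ⟪c, p⟫ + ψ p + L * bregman φ p a + L * bregman φ u p ≤
      ⟪c, u⟫ + ψ u + L * bregman φ u a := by
  have hg : HasGradientAt (fun x ↦ ⟪c, x⟫ + L * bregman φ x a)
      (c + L • (gradient φ p - gradient φ a)) p := by
    rw [hasGradientAt_iff_hasFDerivAt, map_add, map_smul]
    exact (InnerProductSpace.toDual ℝ _ c).hasFDerivAt.add
      ((hasGradientAt_bregman_left hφ a).hasFDerivAt.const_mul L)
  have hmin' : IsMinOn (ψ + fun x ↦ ⟪c, x⟫ + L * bregman φ x a) univ p :=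
    isMinOn_univ_iff.2 fun v ↦ by
      have := isMinOn_univ_iff.1 hmin v
      simp only [Pi.add_apply] at this ⊢
      linarith
  have hopt := hψ.sub_inner_le_of_isMinOn_add hg hmin' u
  rw [inner_add_left, real_inner_smul_left, inner_sub_right] at hopt
  rw [bregman_three_point φ u p a]
  linarith

theorem bregman_proximal_gradient_step_le {F ψ : EuclideanSpace ℝ (Fin d) → ℝ} {σ L : ℝ}
    {y y' : EuclideanSpace ℝ (Fin d)} (hψ : ConvexOn ℝ univ ψ) (hφ : DifferentiableAt ℝ φ y')
    (hmin : IsMinOn (fun x ↦ ⟪gradient F y, x⟫ + ψ x + L * bregman φ x y) univ y')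
    (hsmooth : F y' ≤ F y + ⟪gradient F y, y' - y⟫ + L * bregman φ y' y)
    {u : EuclideanSpace ℝ (Fin d)}
    (hsc : F y + ⟪gradient F y, u - y⟫ + σ * bregman φ u y ≤ F u) :
    F y' + ψ y' + L * bregman φ u y' ≤ F u + ψ u + (L - σ) * bregman φ u y := by
  have := bregman_proximal_three_point hψ hφ hmin u
  rw [inner_sub_right] at hsmooth hsc
  linarith

end Bregman

theorem stmt7_general {d : ℕ} (F φ ψ : EuclideanSpace ℝ (Fin d) → ℝ) (σ L : ℝ)
    (hσ : 0 < σ) (hσL : σ ≤ L)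
    (hφ : Differentiable ℝ φ)
    (hφstrict : StrictConvexOn ℝ Set.univ φ)
    (hψ : ConvexOn ℝ Set.univ ψ)
    (hsmooth : ∀ x y, F x ≤ F y + ⟪gradient F y, x - y⟫ + L * bregman φ x y)
    (hsc : ∀ x y, F y + ⟪gradient F y, x - y⟫ + σ * bregman φ x y ≤ F x)
    (xstar : EuclideanSpace ℝ (Fin d))
    (hxstar : ∀ u, F xstar + ψ xstar ≤ F u + ψ u)
    (x : ℕ → EuclideanSpace ℝ (Fin d))
    (hiter : ∀ t : ℕ, ∀ u,
      ⟪gradient F (x t), x (t + 1)⟫ + ψ (x (t + 1)) + L * bregman φ (x (t + 1)) (x t) ≤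
        ⟪gradient F (x t), u⟫ + ψ u + L * bregman φ u (x t)) :
    ∀ t : ℕ,
      F (x (t + 1)) + ψ (x (t + 1)) - F xstar - ψ xstar ≤
        (1 - σ / L) ^ (t + 1) * L * bregman φ xstar (x 0) := by
  have hL : 0 < L := hσ.trans_le hσL
  have hq : 0 ≤ 1 - σ / L := sub_nonneg.2 ((div_le_one hL).2 hσL)
  have hLσ : L - σ = (1 - σ / L) * L := by field_simp
  have hlyap : ∀ t, F (x (t + 1)) + ψ (x (t + 1)) - F xstar - ψ xstar
      + L * bregman φ xstar (x (t + 1)) ≤ (1 - σ / L) * (L * bregman φ xstar (x t)) := by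
    intro t
    have := bregman_proximal_gradient_step_le hψ (hφ _) (isMinOn_univ_iff.2 (hiter t))
      (hsmooth _ _) (hsc xstar (x t))
    rw [hLσ] at this
    linarith
  intro t
  rw [mul_assoc]
  exact le_pow_mul_of_add_le_mul (e := fun t ↦ F (x t) + ψ (x t) - F xstar - ψ xstar)
    (b := fun t ↦ L * bregman φ xstar (x t)) hq (fun t ↦ by linarith [hxstar (x (t + 1))])
    (fun t ↦ mul_nonneg hL.le (bregman_nonneg hφstrict.convexOn (hφ _) _)) hlyap t

/-- linear convergence of the Bregman proximal gradient method under
relative smoothness and strong convexity: if `F` is `L`-smooth and `σ`-strongly convex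
relative to `φ`, `x_*` minimizes `F + ψ`, and each iterate `x_{t+1}` minimizes
`⟨∇F(x_t), x⟩ + ψ(x) + L D_φ(x, x_t)`, then
`F(x_{t+1}) + ψ(x_{t+1}) − F(x_*) − ψ(x_*) ≤ (1 − σ/L)^{t+1} L D_φ(x_*, x_0)`. -/
theorem stmt7 {d : ℕ} (F φ ψ : EuclideanSpace ℝ (Fin d) → ℝ) (σ L : ℝ)
    (hσ : 0 < σ) (hσL : σ ≤ L)
    (hF : Differentiable ℝ F) (hφ : Differentiable ℝ φ)
    (hφstrict : StrictConvexOn ℝ Set.univ φ)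
    (hψ : ConvexOn ℝ Set.univ ψ)
    (hsmooth : ∀ x y, F x ≤ F y + ⟪gradient F y, x - y⟫ + L * bregman φ x y)
    (hsc : ∀ x y, F y + ⟪gradient F y, x - y⟫ + σ * bregman φ x y ≤ F x)
    (xstar : EuclideanSpace ℝ (Fin d))
    (hxstar : ∀ u, F xstar + ψ xstar ≤ F u + ψ u)
    (x : ℕ → EuclideanSpace ℝ (Fin d))
    (hiter : ∀ t : ℕ, ∀ u,
      ⟪gradient F (x t), x (t + 1)⟫ + ψ (x (t + 1)) + L * bregman φ (x (t + 1)) (x t) ≤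
        ⟪gradient F (x t), u⟫ + ψ u + L * bregman φ u (x t)) :
    ∀ t : ℕ,
      F (x (t + 1)) + ψ (x (t + 1)) - F xstar - ψ xstar ≤
        (1 - σ / L) ^ (t + 1) * L * bregman φ xstar (x 0) :=
  stmt7_general F φ ψ σ L hσ hσL hφ hφstrict hψ hsmooth hsc xstar hxstar x hiter
end

section
/- Let H and Ĥ be symmetric positive semidefinite d×d matrices, λ > 0, α ≥ 0, β > 0, t ≥ 0 with αt < 1. Write H_{α,β} = αH + βI. If −t·H_{α,β} ⪯ Ĥ − H ⪯ t·H_{α,β}, then with μ = t(β − αλ), H_F = H + λI and H_f = Ĥ + λI: (1 + αt + 2μ/λ)^{-1}(H_f + μI) ⪯ H_F ⪯ (1 − αt)^{-1}(H_f + μI), provided μ ≥ 0. -/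
/-!
After multiplying by the constant in front of `H_f + μI`, each difference in the conclusion is
a nonnegative combination of the concentration bounds, `H`, and the identity. For the upper bound
`(1 - αt)(H + λI)` differs from `Ĥ + (λ + μ)I` by the lower concentration bound plus
`(μ - t(β - αλ)) I`. For the lower bound, the upper concentration bound gives
`Ĥ + (λ + μ)I ⪯ (1 + αt) H_F + 2μI`, and `2μI ⪯ (2μ/λ) H_F` because `H_F ⪰ λI`.
-/

namespace Matrix

variable {n : Type*} [DecidableEq n] {H Hhat : Matrix n n ℝ} {lam α β t μ : ℝ}

theorem conditioning_upper_of_concentration_lower (hαt : α * t < 1)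
    (hlower : ((Hhat - H) + t • (α • H + β • (1 : Matrix n n ℝ))).PosSemidef)
    (hμ : t * (β - α * lam) ≤ μ) :
    ((1 - α * t)⁻¹ • ((Hhat + lam • (1 : Matrix n n ℝ)) + μ • (1 : Matrix n n ℝ)) -
      (H + lam • (1 : Matrix n n ℝ))).PosSemidef := by
  have hc : 0 < 1 - α * t := by linarith
  have hslack : (0 : ℝ) ≤ μ - t * (β - α * lam) := by linarith
  have hsplit : (1 - α * t)⁻¹ • ((Hhat + lam • (1 : Matrix n n ℝ)) + μ • 1) - (H + lam • 1) =
      (1 - α * t)⁻¹ • (((Hhat - H) + t • (α • H + β • 1)) +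
        (μ - t * (β - α * lam)) • (1 : Matrix n n ℝ)) := by
    match_scalars <;> field_simp <;> ring
  rw [hsplit]
  exact (hlower.add (PosSemidef.one.smul hslack)).smul (inv_nonneg.2 hc.le)

theorem conditioning_lower_of_concentration_upper (hH : H.PosSemidef) (hlam : 0 < lam)
    (hαt : 0 ≤ α * t)
    (hupper : (t • (α • H + β • (1 : Matrix n n ℝ)) - (Hhat - H)).PosSemidef)
    (hμ : t * (β - α * lam) ≤ μ) (hμ0 : 0 ≤ μ) :
    ((H + lam • (1 : Matrix n n ℝ)) - (1 + α * t + 2 * μ / lam)⁻¹ •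
      ((Hhat + lam • (1 : Matrix n n ℝ)) + μ • (1 : Matrix n n ℝ))).PosSemidef := by
  have hc : 0 < 1 + α * t + 2 * μ / lam := by positivity
  have hslack : (0 : ℝ) ≤ μ - t * (β - α * lam) := by linarith
  have hsplit : (H + lam • (1 : Matrix n n ℝ)) - (1 + α * t + 2 * μ / lam)⁻¹ •
        ((Hhat + lam • (1 : Matrix n n ℝ)) + μ • 1) =
      (1 + α * t + 2 * μ / lam)⁻¹ • ((t • (α • H + β • 1) - (Hhat - H)) + (2 * μ / lam) • H +
        (μ - t * (β - α * lam)) • (1 : Matrix n n ℝ)) := by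
    match_scalars <;> field_simp <;> ring
  rw [hsplit]
  exact ((hupper.add (hH.smul (by positivity))).add (PosSemidef.one.smul hslack)).smul
    (inv_nonneg.2 hc.le)

end Matrix

theorem stmt11_general {d : ℕ} (H Hhat : Matrix (Fin d) (Fin d) ℝ)
    (hH : H.PosSemidef)
    (lam α β t : ℝ) (hlam : 0 < lam) (hα : 0 ≤ α) (ht : 0 ≤ t)
    (hαt : α * t < 1)
    (hupper : (t • (α • H + β • (1 : Matrix (Fin d) (Fin d) ℝ)) - (Hhat - H)).PosSemidef)
    (hlower : ((Hhat - H) + t • (α • H + β • (1 : Matrix (Fin d) (Fin d) ℝ))).PosSemidef)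
    (μ : ℝ) (hμ : μ = t * (β - α * lam)) (hμ0 : 0 ≤ μ) :
    ((H + lam • (1 : Matrix (Fin d) (Fin d) ℝ)) -
        (1 + α * t + 2 * μ / lam)⁻¹ •
          ((Hhat + lam • (1 : Matrix (Fin d) (Fin d) ℝ)) +
            μ • (1 : Matrix (Fin d) (Fin d) ℝ))).PosSemidef ∧
    ((1 - α * t)⁻¹ •
        ((Hhat + lam • (1 : Matrix (Fin d) (Fin d) ℝ)) +
          μ • (1 : Matrix (Fin d) (Fin d) ℝ)) -
      (H + lam • (1 : Matrix (Fin d) (Fin d) ℝ))).PosSemidef :=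
  ⟨Matrix.conditioning_lower_of_concentration_upper hH hlam (mul_nonneg hα ht) hupper hμ.ge hμ0,
    Matrix.conditioning_upper_of_concentration_lower hαt hlower hμ.ge⟩

/-- from relative concentration to relative conditioning, Eq. (22):
if `−t H_{α,β} ⪯ Ĥ − H ⪯ t H_{α,β}` with `H_{α,β} = αH + βI`, then with
`μ = t(β − αλ) ≥ 0`, `H_F = H + λI`, `H_f = Ĥ + λI`:
`(1 + αt + 2μ/λ)⁻¹ (H_f + μI) ⪯ H_F ⪯ (1 − αt)⁻¹ (H_f + μI)`. -/
theorem stmt11 {d : ℕ} (H Hhat : Matrix (Fin d) (Fin d) ℝ)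
    (hH : H.PosSemidef) (hHhat : Hhat.PosSemidef)
    (lam α β t : ℝ) (hlam : 0 < lam) (hα : 0 ≤ α) (hβ : 0 < β) (ht : 0 ≤ t)
    (hαt : α * t < 1)
    (hupper : (t • (α • H + β • (1 : Matrix (Fin d) (Fin d) ℝ)) - (Hhat - H)).PosSemidef)
    (hlower : ((Hhat - H) + t • (α • H + β • (1 : Matrix (Fin d) (Fin d) ℝ))).PosSemidef)
    (μ : ℝ) (hμ : μ = t * (β - α * lam)) (hμ0 : 0 ≤ μ) :
    ((H + lam • (1 : Matrix (Fin d) (Fin d) ℝ)) -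
        (1 + α * t + 2 * μ / lam)⁻¹ •
          ((Hhat + lam • (1 : Matrix (Fin d) (Fin d) ℝ)) +
            μ • (1 : Matrix (Fin d) (Fin d) ℝ))).PosSemidef ∧
    ((1 - α * t)⁻¹ •
        ((Hhat + lam • (1 : Matrix (Fin d) (Fin d) ℝ)) +
          μ • (1 : Matrix (Fin d) (Fin d) ℝ)) -
      (H + lam • (1 : Matrix (Fin d) (Fin d) ℝ))).PosSemidef :=
  stmt11_general H Hhat hH lam α β t hlam hα ht hαt hupper hlower μ hμ hμ0
end

section
/- Let X be a nonnegative random variable with P(X ≥ y) ≤ 2r·exp(−y^{2/r}/2) for y ∈ [0, P] and P(X ≥ y) = 0 for y > P, where r ≥ 2 and P > 0. If 0 < c ≤ P^{2/r−1}/8, then E[e^{2cX}] ≤ 1 + 4cr·∫₀^∞ e^{−y^{2/r}/4} dy. -/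
/-!
The layer-cake formula for `G(x) = e^{αx} - 1` gives
`E[e^{αX}] = 1 + α ∫₀^∞ e^{αy} P(X ≥ y) dy`. With `α = 2c` the integrand vanishes beyond `P`,
and on `(0, P]` the tail bound together with `2cy ≤ y^{2/r}/4` (which is where
`c ≤ P^{2/r-1}/8` enters) dominates it by `4cr e^{-y^{2/r}/4}`.
-/

open MeasureTheory Set Real

lemma integrableOn_exp_neg_rpow_div {q b : ℝ} (hq : 0 < q) (hb : 0 < b) :
    IntegrableOn (fun y : ℝ => exp (-(y ^ q) / b)) (Ioi 0) := by
  refine (integrableOn_rpow_mul_exp_neg_mul_rpow (s := 0) (by norm_num) hq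
    (inv_pos.mpr hb)).congr_fun (fun y _ => ?_) measurableSet_Ioi
  simp only [rpow_zero, one_mul]
  ring_nf

lemma two_mul_mul_le_rpow_div_four {q c P y : ℝ} (hq : q ≤ 1) (hcP : c ≤ P ^ (q - 1) / 8)
    (hy : 0 < y) (hyP : y ≤ P) : 2 * c * y ≤ y ^ q / 4 := by
  have hPy : P ^ (q - 1) ≤ y ^ (q - 1) := rpow_le_rpow_of_nonpos hy hyP (by linarith)
  have hyq : y ^ (q - 1) * y = y ^ q := by
    rw [← rpow_add_one hy.ne', sub_add_cancel]
  nlinarith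

lemma tail_bound_mul_density_le {q c P r y : ℝ} (hr : 0 ≤ r) (hc : 0 ≤ c) (hq : q ≤ 1)
    (hcP : c ≤ P ^ (q - 1) / 8) (hy : 0 < y) (hyP : y ≤ P) :
    2 * r * exp (-(y ^ q) / 2) * (2 * c * exp (2 * c * y)) ≤ 4 * c * r * exp (-(y ^ q) / 4) := by
  have hexp : 2 * r * exp (-(y ^ q) / 2) * (2 * c * exp (2 * c * y)) =
      4 * c * r * exp (-(y ^ q) / 2 + 2 * c * y) := by
    rw [exp_add]; ring
  rw [hexp]
  have hlin := two_mul_mul_le_rpow_div_four hq hcP hy hyP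
  gcongr
  linarith

section LayerCake

variable {Ω : Type*} [MeasurableSpace Ω] {μ : Measure Ω} {X : Ω → ℝ} {α : ℝ}

lemma lintegral_ofReal_exp_mul_sub_one (hα : 0 ≤ α) (hX : 0 ≤ᵐ[μ] X)
    (hXm : AEMeasurable X μ) :
    ∫⁻ ω, ENNReal.ofReal (exp (α * X ω) - 1) ∂μ =
      ∫⁻ t in Ioi 0, μ {ω | t ≤ X ω} * ENNReal.ofReal (α * exp (α * t)) := by
  have hcont : Continuous fun t => α * exp (α * t) := by fun_prop
  have hprim (x : ℝ) : ∫ t in (0 : ℝ)..x, α * exp (α * t) = exp (α * x) - 1 := by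
    have hderiv (t : ℝ) : HasDerivAt (fun u => exp (α * u)) (α * exp (α * t)) t := by
      simpa [mul_comm] using ((hasDerivAt_id t).const_mul α).exp
    rw [intervalIntegral.integral_eq_sub_of_hasDerivAt (fun t _ => hderiv t)
      (hcont.intervalIntegrable _ _)]
    simp
  simp_rw [← hprim]
  exact lintegral_comp_eq_lintegral_meas_le_mul μ hX hXm
    (fun t _ => hcont.intervalIntegrable _ _) (Filter.Eventually.of_forall fun t => by positivity)

lemma integral_exp_mul_le_one_add_of_tail [IsProbabilityMeasure μ] (hα : 0 ≤ α)
    (hX : 0 ≤ᵐ[μ] X) (hXm : AEMeasurable X μ) {f : ℝ → ℝ} (hf : IntegrableOn f (Ioi 0))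
    (htail : ∀ t > 0, μ.real {ω | t ≤ X ω} * (α * exp (α * t)) ≤ f t) :
    ∫ ω, exp (α * X ω) ∂μ ≤ 1 + ∫ t in Ioi 0, f t := by
  have hf0 : 0 ≤ᵐ[volume.restrict (Ioi 0)] f :=
    (ae_restrict_iff' measurableSet_Ioi).mpr <| Filter.Eventually.of_forall fun t ht =>
      (by positivity : 0 ≤ μ.real {ω | t ≤ X ω} * (α * exp (α * t))).trans (htail t ht)
  have hnn : 0 ≤ᵐ[μ] fun ω => exp (α * X ω) - 1 := by
    filter_upwards [hX] with ω hω
    simpa using one_le_exp (mul_nonneg hα hω)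
  have hmeas : AEStronglyMeasurable (fun ω => exp (α * X ω) - 1) μ :=
    ((hXm.const_mul α).exp.sub_const 1).aestronglyMeasurable
  have hbound : ∫⁻ ω, ENNReal.ofReal (exp (α * X ω) - 1) ∂μ ≤
      ENNReal.ofReal (∫ t in Ioi 0, f t) := by
    rw [lintegral_ofReal_exp_mul_sub_one hα hX hXm, ofReal_integral_eq_lintegral_ofReal hf hf0]
    refine setLIntegral_mono' measurableSet_Ioi fun t ht => ?_
    rw [← ofReal_measureReal, ← ENNReal.ofReal_mul measureReal_nonneg]
    exact ENNReal.ofReal_le_ofReal (htail t ht)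
  have hint : Integrable (fun ω => exp (α * X ω) - 1) μ :=
    ⟨hmeas, (hasFiniteIntegral_iff_ofReal hnn).mpr (hbound.trans_lt ENNReal.ofReal_lt_top)⟩
  have hsub : ∫ ω, (exp (α * X ω) - 1) ∂μ ≤ ∫ t in Ioi 0, f t := by
    rw [integral_eq_lintegral_of_nonneg_ae hnn hmeas]
    exact ENNReal.toReal_le_of_le_ofReal (integral_nonneg_of_ae hf0) hbound
  have hsplit : ∫ ω, exp (α * X ω) ∂μ = ∫ ω, (exp (α * X ω) - 1) ∂μ + 1 := by
    have hexp : Integrable (fun ω => exp (α * X ω)) μ := by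
      refine (hint.add (integrable_const 1)).congr (ae_of_all _ fun ω => ?_)
      simp
    rw [integral_sub hexp (integrable_const 1)]
    simp
  linarith

end LayerCake

theorem stmt17_general {Ω : Type*} [MeasurableSpace Ω] (μ : Measure Ω)
    [IsProbabilityMeasure μ] (X : Ω → ℝ) (hXmeas : Measurable X)
    (hXnn : ∀ ω, 0 ≤ X ω)
    (r P c : ℝ) (hr : 2 ≤ r)
    (hc : 0 < c) (hcP : c ≤ P ^ (2 / r - 1) / 8)
    (htail : ∀ y : ℝ, 0 ≤ y → y ≤ P →
      μ {ω | y ≤ X ω} ≤ ENNReal.ofReal (2 * r * Real.exp (-(y ^ (2 / r)) / 2)))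
    (htail' : ∀ y : ℝ, P < y → μ {ω | y ≤ X ω} = 0) :
    ∫ ω, Real.exp (2 * c * X ω) ∂μ ≤
      1 + 4 * c * r * ∫ y in Set.Ioi (0 : ℝ), Real.exp (-(y ^ (2 / r)) / 4) := by
  have hq : 2 / r ≤ 1 := (div_le_one (by linarith)).mpr hr
  have hweighted : ∀ t > 0, μ.real {ω | t ≤ X ω} * (2 * c * exp (2 * c * t)) ≤
      4 * c * r * exp (-(t ^ (2 / r)) / 4) := by
    intro t ht
    rcases le_or_gt t P with htP | hPt
    · calc μ.real {ω | t ≤ X ω} * (2 * c * exp (2 * c * t))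
          ≤ 2 * r * exp (-(t ^ (2 / r)) / 2) * (2 * c * exp (2 * c * t)) := by
            gcongr
            exact ENNReal.toReal_le_of_le_ofReal (by positivity) (htail t ht.le htP)
        _ ≤ 4 * c * r * exp (-(t ^ (2 / r)) / 4) :=
            tail_bound_mul_density_le (by linarith) hc.le hq hcP ht htP
    · rw [measureReal_def, htail' t hPt, ENNReal.toReal_zero, zero_mul]
      positivity
  calc ∫ ω, exp (2 * c * X ω) ∂μ
      ≤ 1 + ∫ t in Ioi 0, 4 * c * r * exp (-(t ^ (2 / r)) / 4) :=
        integral_exp_mul_le_one_add_of_tail (by positivity) (ae_of_all _ hXnn)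
          hXmeas.aemeasurable
          ((integrableOn_exp_neg_rpow_div (by positivity) four_pos).const_mul _) hweighted
    _ = 1 + 4 * c * r * ∫ y in Ioi 0, exp (-(y ^ (2 / r)) / 4) := by
        rw [integral_const_mul]

/-- exponential moment bound in the chaining proof: if `X ≥ 0`,
`P(X ≥ y) ≤ 2r e^{−y^{2/r}/2}` for `y ∈ [0, P]`, `P(X ≥ y) = 0` for `y > P`,
`r ≥ 2`, `P > 0` and `0 < c ≤ P^{2/r−1}/8`, then
`E[e^{2cX}] ≤ 1 + 4cr ∫₀^∞ e^{−y^{2/r}/4} dy`. -/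
theorem stmt17 {Ω : Type*} [MeasurableSpace Ω] (μ : Measure Ω)
    [IsProbabilityMeasure μ] (X : Ω → ℝ) (hXmeas : Measurable X)
    (hXnn : ∀ ω, 0 ≤ X ω)
    (r P c : ℝ) (hr : 2 ≤ r) (hP : 0 < P)
    (hc : 0 < c) (hcP : c ≤ P ^ (2 / r - 1) / 8)
    (htail : ∀ y : ℝ, 0 ≤ y → y ≤ P →
      μ {ω | y ≤ X ω} ≤ ENNReal.ofReal (2 * r * Real.exp (-(y ^ (2 / r)) / 2)))
    (htail' : ∀ y : ℝ, P < y → μ {ω | y ≤ X ω} = 0) :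
    ∫ ω, Real.exp (2 * c * X ω) ∂μ ≤
      1 + 4 * c * r * ∫ y in Set.Ioi (0 : ℝ), Real.exp (-(y ^ (2 / r)) / 4) :=
  stmt17_general μ X hXmeas hXnn r P c hr hc hcP htail htail'
end
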